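/- Under the combinatorial setup (sublattice S, partitions E⁰_S, E^>_S, E^*_S satisfying RV1, RV2), for any z ∈ Fⁿ and ε, R > 0, the smallest set of S containing the support of z equals the smallest set of S containing the support of α^ε(z), which equals the smallest set of S containing the support of β^R(α^ε(z)). -/

import Mathlib

open Classical

/-- `Z_i = ⋃ {S ∈ 𝒮 : i ∉ S}`. -/
def Zset (n : ℕ) (𝒮 : Set (Set (Fin n))) (i : Fin n) : Set (Fin n) :=
  ⋃₀ {S ∈ 𝒮 | i ∉ S}

/-- `α^ε_i(z) = z_i + ε ∑_{j ∉ Z_i} z_j`. -/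
noncomputable def alphaMap (F : Subfield ℝ) (n : ℕ) (𝒮 : Set (Set (Fin n))) (ε : F)
    (z : Fin n → F) : Fin n → F :=
  fun i => z i + ε * ∑ j ∈ Finset.univ.filter (fun j => j ∉ Zset n 𝒮 i), z j

/-- `P_i = ⋃ {S ∈ 𝒮 : i ∈ E^≥_S}` where `E^≥_S = Sᶜ ∪ E^>_S`. -/
def Pset (n : ℕ) (𝒮 : Set (Set (Fin n))) (Egt : Set (Fin n) → Set (Fin n)) (i : Fin n) :
    Set (Fin n) :=
  ⋃₀ {S ∈ 𝒮 | i ∈ Sᶜ ∪ Egt S}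

/-- `β^R_i(y) = y_i - R ∑_{j ∉ P_i, P_j ≠ P_i} y_j`. -/
noncomputable def betaMap (F : Subfield ℝ) (n : ℕ) (𝒮 : Set (Set (Fin n)))
    (Egt : Set (Fin n) → Set (Fin n)) (R : F) (y : Fin n → F) : Fin n → F :=
  fun i => y i - R * ∑ j ∈ Finset.univ.filter
    (fun j => j ∉ Pset n 𝒮 Egt i ∧ Pset n 𝒮 Egt j ≠ Pset n 𝒮 Egt i), y j

/-- `U⁺ = ⋃_{S ∈ 𝒮} F_{>0}^S · 0^{Sᶜ}`. -/
def Uset (F : Subfield ℝ) (n : ℕ) (𝒮 : Set (Set (Fin n))) : Set (Fin n → F) :=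
  {x | ∃ S ∈ 𝒮, (∀ i ∈ S, 0 < x i) ∧ ∀ i ∉ S, x i = 0}

/-- `V⁺ = ⋃_{S ∈ 𝒮} 0^{E⁰_S} · F_{>0}^{E^>_S} · F^{E^*_S}` (zero off `S`, strictly
positive on `E^>_S`, arbitrary on `E^*_S`). -/
def Vset (F : Subfield ℝ) (n : ℕ) (𝒮 : Set (Set (Fin n)))
    (Egt : Set (Fin n) → Set (Fin n)) : Set (Fin n → F) :=
  {x | ∃ S ∈ 𝒮, (∀ i ∉ S, x i = 0) ∧ ∀ i ∈ Egt S, 0 < x i}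

/-!
For `S ∈ 𝒮` we show `supp x ⊆ S ↔ supp (α x) ⊆ S` and `supp y ⊆ S ↔ supp (β y) ⊆ S`, so the
families intersected on the two sides coincide. Both maps are triangular: `α_i` adds to `z_i`
the sum over `j ≽ i` for the preorder `i ≼ j :↔ j ∉ Z_i`, and `β_i` subtracts from `y_i` a sum
over `j` with `P_i ⊊ P_j`; in both cases the complement of `S` is upward closed. Descending
induction then shows that `α z` (resp. `β y`) vanishes off `S` only if `z` (resp. `y`) does.
For `α` the diagonal block is not trivial: on a `≼`-class `C` where everything strictly above
vanishes, every `z_k` equals `-ε σ` with `σ = ∑_C z`, so `σ (1 + |C| ε) = 0` and `σ = 0`.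
-/

open Finset

section Triangular

variable {ι 𝕜 : Type*} [Fintype ι] {r : ι → ι → Prop} {U : Set ι}

lemma sum_filter_eq_zero_of_upward_closed [DecidableRel r] [AddCommMonoid 𝕜]
    (hU : ∀ i j, r i j → i ∈ U → j ∈ U) {y : ι → 𝕜} (hy : ∀ i ∈ U, y i = 0) {i : ι}
    (hi : i ∈ U) : ∑ j ∈ univ.filter (r i), y j = 0 :=
  sum_eq_zero fun j hj => hy j (hU i j (mem_filter.1 hj).2 hi)

theorem sub_mul_sum_eq_zero_iff [DecidableRel r] [Ring 𝕜] (hr : WellFounded (flip r))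
    (hU : ∀ i j, r i j → i ∈ U → j ∈ U) (R : 𝕜) (y : ι → 𝕜) :
    (∀ i ∈ U, y i - R * ∑ j ∈ univ.filter (r i), y j = 0) ↔ ∀ i ∈ U, y i = 0 := by
  refine ⟨fun h i => ?_, fun hy i hi => by
    rw [hy i hi, sum_filter_eq_zero_of_upward_closed hU hy hi, mul_zero, sub_zero]⟩
  induction i using hr.induction with
  | _ i ih =>
    intro hi
    have hsum : ∑ j ∈ univ.filter (r i), y j = 0 :=
      sum_eq_zero fun j hj => ih j (mem_filter.1 hj).2 (hU i j (mem_filter.1 hj).2 hi)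
    simpa [hsum] using h i hi

lemma wellFounded_flip_strict (r : ι → ι → Prop) [IsPreorder ι r] :
    WellFounded fun j i => r i j ∧ ¬ r j i :=
  (InvImage.wf (fun i => {k | r i k}) wellFounded_lt).mono fun _ i h =>
    Set.ssubset_iff_subset_ne.2
      ⟨fun _ hk => trans_of r h.1 hk, fun he => h.2 ((Set.ext_iff.1 he i).2 (refl_of r i))⟩

theorem add_mul_sum_eq_zero_iff [Field 𝕜] [LinearOrder 𝕜] [IsStrictOrderedRing 𝕜]
    [IsPreorder ι r] [DecidableRel r] (hU : ∀ i j, r i j → i ∈ U → j ∈ U) {ε : 𝕜} (hε : 0 ≤ ε)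
    (z : ι → 𝕜) :
    (∀ i ∈ U, z i + ε * ∑ j ∈ univ.filter (r i), z j = 0) ↔ ∀ i ∈ U, z i = 0 := by
  refine ⟨fun h i => ?_, fun hz i hi => by
    rw [hz i hi, sum_filter_eq_zero_of_upward_closed hU hz hi, mul_zero, add_zero]⟩
  induction i using (wellFounded_flip_strict r).induction with
  | _ i ih =>
    intro hi
    set C := univ.filter fun k => r i k ∧ r k i
    set σ := ∑ j ∈ C, z j
    have hclass : ∀ k ∈ C, z k = -(ε * σ) := by
      intro k hk
      obtain ⟨hik, hki⟩ := (mem_filter.1 hk).2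
      have hsum : ∑ j ∈ univ.filter (r k), z j = σ := by
        refine (sum_subset (fun j hj => ?_) fun j hj hjC => ?_).symm
        · exact mem_filter.2 ⟨mem_univ j, trans_of r hki (mem_filter.1 hj).2.1⟩
        · have hij : r i j := trans_of r hik (mem_filter.1 hj).2
          have hji : ¬ r j i := fun hji => hjC (mem_filter.2 ⟨mem_univ j, hij, hji⟩)
          exact ih j ⟨hij, hji⟩ (hU i j hij hi)
      linear_combination h k (hU i k hik hi) - ε * hsum
    have hσ : σ * (1 + #C * ε) = 0 := by
      have : σ = #C * -(ε * σ) := by rw [← nsmul_eq_mul, ← sum_const, ← sum_congr rfl hclass]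
      linear_combination this
    have hpos : (0 : 𝕜) < 1 + #C * ε := by positivity
    have hσ0 : σ = 0 := (mul_eq_zero.1 hσ).resolve_right hpos.ne'
    simpa [hσ0] using hclass i (mem_filter.2 ⟨mem_univ i, refl_of r i, refl_of r i⟩)

end Triangular

section ZsetPset

variable {n : ℕ} {𝒮 : Set (Set (Fin n))} {Egt : Set (Fin n) → Set (Fin n)} {S : Set (Fin n)}
  {i j : Fin n}

lemma subset_Zset (hS : S ∈ 𝒮) (hi : i ∉ S) : S ⊆ Zset n 𝒮 i :=
  Set.subset_sUnion_of_mem ⟨hS, hi⟩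

lemma subset_Pset (hS : S ∈ 𝒮) (hi : i ∉ S) : S ⊆ Pset n 𝒮 Egt i :=
  Set.subset_sUnion_of_mem ⟨hS, Or.inl hi⟩

lemma Zset_subset_of_notMem (hj : j ∉ Zset n 𝒮 i) : Zset n 𝒮 i ⊆ Zset n 𝒮 j := by
  rintro k ⟨T, ⟨hT, hiT⟩, hkT⟩
  exact ⟨T, ⟨hT, fun hjT => hj ⟨T, ⟨hT, hiT⟩, hjT⟩⟩, hkT⟩

lemma Pset_subset_of_notMem (hj : j ∉ Pset n 𝒮 Egt i) : Pset n 𝒮 Egt i ⊆ Pset n 𝒮 Egt j := by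
  rintro k ⟨T, ⟨hT, hiT⟩, hkT⟩
  exact ⟨T, ⟨hT, Or.inl fun hjT => hj ⟨T, ⟨hT, hiT⟩, hjT⟩⟩, hkT⟩

instance isPreorder_notMem_Zset : IsPreorder (Fin n) fun i j => j ∉ Zset n 𝒮 i where
  refl _ := fun ⟨_, ⟨_, hiT⟩, hiT'⟩ => hiT hiT'
  trans _ _ _ hij hjk hk := hjk (Zset_subset_of_notMem hij hk)

end ZsetPset

variable {F : Subfield ℝ} {n : ℕ} {𝒮 : Set (Set (Fin n))} {S : Set (Fin n)}

theorem support_alphaMap_subset_iff {ε : F} (hε : 0 ≤ ε) (z : Fin n → F) (hS : S ∈ 𝒮) :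
    Function.support (alphaMap F n 𝒮 ε z) ⊆ S ↔ Function.support z ⊆ S := by
  simp only [Function.support_subset_iff']
  exact add_mul_sum_eq_zero_iff (r := fun i j => j ∉ Zset n 𝒮 i) (U := Sᶜ)
    (fun i j hij hi hj => hij (subset_Zset hS hi hj)) hε z

theorem support_betaMap_subset_iff (Egt : Set (Fin n) → Set (Fin n)) (R : F) (y : Fin n → F)
    (hS : S ∈ 𝒮) :
    Function.support (betaMap F n 𝒮 Egt R y) ⊆ S ↔ Function.support y ⊆ S := by
  simp only [Function.support_subset_iff']
  have hwf :
      WellFounded (flip fun i j => j ∉ Pset n 𝒮 Egt i ∧ Pset n 𝒮 Egt j ≠ Pset n 𝒮 Egt i) :=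
    (InvImage.wf (Pset n 𝒮 Egt) wellFounded_gt).mono fun _ _ h =>
      Set.ssubset_iff_subset_ne.2 ⟨Pset_subset_of_notMem h.1, h.2.symm⟩
  exact sub_mul_sum_eq_zero_iff (U := Sᶜ) hwf
    (fun i j hij hi hj => hij.1 (subset_Pset hS hi hj)) R y

theorem stmt11_general (F : Subfield ℝ) (n : ℕ) (𝒮 : Set (Set (Fin n)))
    (Egt : Set (Fin n) → Set (Fin n))
    (ε R : F) (hε : 0 < ε) (z : Fin n → F) :
    ⋂₀ {S ∈ 𝒮 | {i | z i ≠ 0} ⊆ S} =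
      ⋂₀ {S ∈ 𝒮 | {i | alphaMap F n 𝒮 ε z i ≠ 0} ⊆ S} ∧
    ⋂₀ {S ∈ 𝒮 | {i | z i ≠ 0} ⊆ S} =
      ⋂₀ {S ∈ 𝒮 | {i | betaMap F n 𝒮 Egt R (alphaMap F n 𝒮 ε z) i ≠ 0} ⊆ S} := by
  have hα : {S ∈ 𝒮 | Function.support z ⊆ S} =
      {S ∈ 𝒮 | Function.support (alphaMap F n 𝒮 ε z) ⊆ S} :=
    Set.ext fun S => and_congr_right fun hS => (support_alphaMap_subset_iff hε.le z hS).symm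
  have hβ : {S ∈ 𝒮 | Function.support (alphaMap F n 𝒮 ε z) ⊆ S} =
      {S ∈ 𝒮 | Function.support (betaMap F n 𝒮 Egt R (alphaMap F n 𝒮 ε z)) ⊆ S} :=
    Set.ext fun S => and_congr_right fun hS => (support_betaMap_subset_iff Egt R _ hS).symm
  exact ⟨congrArg _ hα, congrArg _ (hα.trans hβ)⟩

/-- Under the combinatorial setup (sublattice `𝒮`, partitions satisfying (RV1), (RV2)),
for any `z ∈ Fⁿ` and `ε, R > 0`, the smallest set of `𝒮` containing the support of `z`
(realized as the intersection of all members of `𝒮` containing the support) equals the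
one for `α^ε(z)`, which equals the one for `β^R(α^ε(z))`. -/
theorem stmt11 (F : Subfield ℝ) (n : ℕ) (𝒮 : Set (Set (Fin n)))
    (hempty : ∅ ∈ 𝒮) (huniv : Set.univ ∈ 𝒮)
    (hcup : ∀ S₁ ∈ 𝒮, ∀ S₂ ∈ 𝒮, S₁ ∪ S₂ ∈ 𝒮)
    (hcap : ∀ S₁ ∈ 𝒮, ∀ S₂ ∈ 𝒮, S₁ ∩ S₂ ∈ 𝒮)
    (Egt Estar : Set (Fin n) → Set (Fin n))
    (hpart : ∀ S ∈ 𝒮, Egt S ∩ Estar S = ∅ ∧ Egt S ∪ Estar S = S)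
    (hRV1 : ∀ S₁ ∈ 𝒮, ∀ S₂ ∈ 𝒮,
      (S₁ ∪ S₂)ᶜ ∪ Egt (S₁ ∪ S₂) = (S₁ᶜ ∪ Egt S₁) ∩ (S₂ᶜ ∪ Egt S₂))
    (hRV2 : ∀ S₁ ∈ 𝒮, ∀ S₂ ∈ 𝒮, ¬ S₂ ⊆ S₁ → (Egt S₂ \ S₁).Nonempty)
    (ε R : F) (hε : 0 < ε) (hR : 0 < R) (z : Fin n → F) :
    ⋂₀ {S ∈ 𝒮 | {i | z i ≠ 0} ⊆ S} =
      ⋂₀ {S ∈ 𝒮 | {i | alphaMap F n 𝒮 ε z i ≠ 0} ⊆ S} ∧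
    ⋂₀ {S ∈ 𝒮 | {i | z i ≠ 0} ⊆ S} =
      ⋂₀ {S ∈ 𝒮 | {i | betaMap F n 𝒮 Egt R (alphaMap F n 𝒮 ε z) i ≠ 0} ⊆ S} :=
  stmt11_general F n 𝒮 Egt ε R hε z
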